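/- Let a maintenance instance on a graph be given, let t_1 < … < t_ℓ be the distinct values of d_e − p_e over e ∈ E, and set t_0 = 0 and t_{ℓ+1} = T. For i ∈ {1,…,ℓ+1} let S_i be the non-preemptive schedule that starts every edge e with d_e − p_e ≥ t_i at time d_e − p_e and every other edge at time r_e. Then every feasible non-preemptive schedule has total connectivity time at most (ℓ+1) · max_{i=1,…,ℓ+1} (total connectivity time of S_i). (This is the (ℓ+1)-approximation guarantee for non-preemptive MAXCONNECTIVITY.) -/

import Mathlib

open MeasureTheory Set
open scoped ENNReal

/-!
Cut `[0, T]` at `0 = t₀, t₁, …, t_ℓ, t_{ℓ+1} = T`. On the open window `(t_{i-1}, t_i)` the schedule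
`Sᵢ` keeps every edge with `d e - p e ≥ tᵢ` out of maintenance, and every other edge has
`d e - p e ≤ t_{i-1}`, so it is maintained in the window under `Sᵢ` (started at `r e`) only at
times when any feasible schedule, which must have started it by `d e - p e`, maintains it too.
Hence on each window the connectivity time of any schedule is at most that of `Sᵢ`; the grid
points are null, and summing over the `ℓ + 1` windows gives the bound.
-/

/-- Feasibility of a non-preemptive schedule: each edge `e` starts its maintenance at time
`σ e` with `r e ≤ σ e` and `σ e + p e ≤ d e`; it is maintained during `[σ e, σ e + p e]`. -/
def NonpreemptFeasible {V : Type*} (G : SimpleGraph V) (r d p : Sym2 V → ℝ)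
    (σ : Sym2 V → ℝ) : Prop :=
  ∀ e ∈ G.edgeSet, r e ≤ σ e ∧ σ e + p e ≤ d e

/-- The network is connected at time `t` under the non-preemptive schedule `σ`:
`sp` and `sm` are joined by a path of edges not maintained at `t`. -/
def ConnAt {V : Type*} (G : SimpleGraph V) (sp sm : V) (p : Sym2 V → ℝ)
    (σ : Sym2 V → ℝ) (t : ℝ) : Prop :=
  (G.deleteEdges {e | t ∈ Set.Icc (σ e) (σ e + p e)}).Reachable sp sm

/-- The schedule `Sᵢ` of the approximation algorithm (for a threshold time `θ`):
every edge `e` with latest start time `d e - p e ≥ θ` starts at `d e - p e`,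
and every other edge starts at its release date `r e`. -/
noncomputable def greedySchedule {V : Type*} (_G : SimpleGraph V) (r d p : Sym2 V → ℝ)
    (θ : ℝ) : Sym2 V → ℝ :=
  fun e => if θ ≤ d e - p e then d e - p e else r e

/-- The threshold times `t₁, …, t_ℓ, t_{ℓ+1} = T`. -/
def threshPts {ℓ : ℕ} (m : Fin ℓ → ℝ) (T : ℝ) : Fin (ℓ + 1) → ℝ :=
  Fin.snoc m T

/-- The full grid of time points `t₀ = 0, t₁, …, t_ℓ, t_{ℓ+1} = T`. -/
def gridPts {ℓ : ℕ} (m : Fin ℓ → ℝ) (T : ℝ) : Fin (ℓ + 2) → ℝ :=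
  Fin.cons 0 (threshPts m T)

theorem ConnAt.mono {V : Type*} {G : SimpleGraph V} {sp sm : V} {p σ τ : Sym2 V → ℝ} {t : ℝ}
    (hc : ConnAt G sp sm p σ t)
    (h : ∀ e ∈ G.edgeSet, t ∈ Icc (τ e) (τ e + p e) → t ∈ Icc (σ e) (σ e + p e)) :
    ConnAt G sp sm p τ t := by
  refine SimpleGraph.Reachable.mono (fun a b hab => ?_) hc
  rw [SimpleGraph.deleteEdges_adj] at hab ⊢
  exact ⟨hab.1, fun hτ => hab.2 (h _ hab.1 hτ)⟩

theorem connAt_greedySchedule_of_feasible {V : Type*} {G : SimpleGraph V} {sp sm : V}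
    {r d p σ : Sym2 V → ℝ} (hσ : NonpreemptFeasible G r d p σ) {θ₀ θ t : ℝ}
    (hgap : ∀ e ∈ G.edgeSet, d e - p e < θ → d e - p e ≤ θ₀) (ht : t ∈ Ioo θ₀ θ)
    (hc : ConnAt G sp sm p σ t) : ConnAt G sp sm p (greedySchedule G r d p θ) t := by
  refine hc.mono fun e he hmaint => ?_
  obtain ⟨hrσ, hσd⟩ := hσ e he
  unfold greedySchedule at hmaint
  split_ifs at hmaint with hθ
  · exact absurd (hmaint.1.trans_lt ht.2) hθ.not_gt
  · have := hgap e he (not_le.1 hθ)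
    exact ⟨by linarith [ht.1], by linarith [hmaint.2]⟩

theorem Fin.exists_castSucc_le_le_succ {α : Type*} [LinearOrder α] {n : ℕ}
    (g : Fin (n + 2) → α) {t : α} (h₀ : g 0 ≤ t) (hlast : t ≤ g (Fin.last (n + 1))) :
    ∃ i : Fin (n + 1), g i.castSucc ≤ t ∧ t ≤ g i.succ := by
  induction n with
  | zero => exact ⟨0, h₀, hlast⟩
  | succ n ih =>
    by_cases h₁ : t ≤ g 1
    · exact ⟨0, h₀, h₁⟩
    · obtain ⟨i, hi⟩ := ih (g ∘ Fin.succ) (le_of_not_ge h₁) (by simpa [Fin.succ_last] using hlast)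
      exact ⟨i.succ, by simpa [← Fin.succ_castSucc] using hi⟩

theorem measure_le_sum_inter_Ioo {α : Type*} [LinearOrder α] [MeasurableSpace α]
    (μ : Measure α) [NullSingletonClass μ] {n : ℕ} (g : Fin (n + 2) → α) {s : Set α}
    (hs : s ⊆ Icc (g 0) (g (Fin.last (n + 1)))) :
    μ s ≤ ∑ i : Fin (n + 1), μ (s ∩ Ioo (g i.castSucc) (g i.succ)) :=
  calc μ s ≤ μ (⋃ i : Fin (n + 1), s ∩ Icc (g i.castSucc) (g i.succ)) := by
        refine measure_mono fun t ht => mem_iUnion.2 ?_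
        obtain ⟨i, hi⟩ := Fin.exists_castSucc_le_le_succ g (hs ht).1 (hs ht).2
        exact ⟨i, ht, hi⟩
    _ ≤ ∑ i : Fin (n + 1), μ (s ∩ Icc (g i.castSucc) (g i.succ)) := measure_iUnion_fintype_le μ _
    _ = ∑ i : Fin (n + 1), μ (s ∩ Ioo (g i.castSucc) (g i.succ)) :=
        Finset.sum_congr rfl fun _ _ => measure_congr ((ae_eq_refl s).inter Ioo_ae_eq_Icc.symm)

section Grid

variable {ℓ : ℕ} (m : Fin ℓ → ℝ) (T : ℝ)

@[simp]
theorem threshPts_castSucc (j : Fin ℓ) : threshPts m T j.castSucc = m j :=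
  Fin.snoc_castSucc (α := fun _ => ℝ) ..

@[simp]
theorem gridPts_zero : gridPts m T 0 = 0 := rfl

@[simp]
theorem gridPts_succ (i : Fin (ℓ + 1)) : gridPts m T i.succ = threshPts m T i :=
  Fin.cons_succ (α := fun _ => ℝ) ..

@[simp]
theorem gridPts_last : gridPts m T (Fin.last (ℓ + 1)) = T := by
  simp [← Fin.succ_last, threshPts]

variable {m T}

theorem le_gridPts_castSucc_of_lt_threshPts (hm : Monotone m) {j : Fin ℓ} {i : Fin (ℓ + 1)}
    (h : m j < threshPts m T i) : m j ≤ gridPts m T i.castSucc := by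
  have hji : (j : ℕ) < i := by
    rcases Fin.eq_castSucc_or_eq_last i with ⟨k, rfl⟩ | rfl
    · rw [threshPts_castSucc] at h
      exact hm.reflect_lt h
    · exact j.isLt
  obtain ⟨k, rfl⟩ : ∃ k : Fin ℓ, i = k.succ := ⟨⟨i - 1, by omega⟩, by ext; simp; omega⟩
  rw [← Fin.succ_castSucc, gridPts_succ, threshPts_castSucc]
  exact hm (Fin.le_def.2 (by simp at hji; omega))

end Grid

theorem greedy_approximation {V : Type*}
    (G : SimpleGraph V) (sp sm : V) (r d p : Sym2 V → ℝ)
    {ℓ : ℕ} (m : Fin ℓ → ℝ) (hm : StrictMono m)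
    (hmrange : Set.range m = {τ : ℝ | ∃ e ∈ G.edgeSet, d e - p e = τ})
    (T : ℝ)
    (σ : Sym2 V → ℝ) (hσ : NonpreemptFeasible G r d p σ) :
    volume {t ∈ Set.Icc 0 T | ConnAt G sp sm p σ t} ≤
      (ℓ + 1 : ℝ≥0∞) * ⨆ i : Fin (ℓ + 1),
        volume {t ∈ Set.Icc 0 T |
          ConnAt G sp sm p (greedySchedule G r d p (threshPts m T i)) t} := by
  let greedyConn := fun i : Fin (ℓ + 1) => volume {t ∈ Set.Icc 0 T |
    ConnAt G sp sm p (greedySchedule G r d p (threshPts m T i)) t}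
  have hgap (i : Fin (ℓ + 1)) : ∀ e ∈ G.edgeSet,
      d e - p e < threshPts m T i → d e - p e ≤ gridPts m T i.castSucc := by
    intro e he
    obtain ⟨j, hj⟩ : d e - p e ∈ range m := hmrange ▸ ⟨e, he, rfl⟩
    exact hj ▸ le_gridPts_castSucc_of_lt_threshPts hm.monotone
  calc volume {t ∈ Icc 0 T | ConnAt G sp sm p σ t}
      ≤ ∑ i : Fin (ℓ + 1), volume ({t ∈ Icc 0 T | ConnAt G sp sm p σ t} ∩
          Ioo (gridPts m T i.castSucc) (gridPts m T i.succ)) :=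
        measure_le_sum_inter_Ioo volume (gridPts m T) <| by
          rw [gridPts_zero, gridPts_last]
          exact sep_subset _ _
    _ ≤ ∑ i, greedyConn i := by
        refine Finset.sum_le_sum fun i _ => measure_mono fun t ⟨⟨ht, hc⟩, hwin⟩ => ⟨ht, ?_⟩
        rw [gridPts_succ] at hwin
        exact connAt_greedySchedule_of_feasible hσ (hgap i) hwin hc
    _ ≤ (ℓ + 1 : ℝ≥0∞) * ⨆ i, greedyConn i := by
        simpa using Finset.univ.sum_le_card_nsmul greedyConn _ fun i _ => le_iSup greedyConn i
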